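/- arXiv:1512.02825 — 2 statements merged into one kernel-verified Lean document; each statement's English description precedes it below -/
import Mathlib

section
/- Pointwise algebraic Picone identity: for vectors X, Y in R^n, real numbers u, and v > 0, with p > 1 and g : (0,∞) → (0,∞) differentiable satisfying g'(v) ≥ (p-1)·g(v)^((p-2)/(p-1)), the quantity L = |X|^p - p·(|u|^(p-2)·u/g(v))·⟨X,Y⟩·|Y|^(p-2) + (g'(v)·|u|^p/g(v)^2)·|Y|^p is nonnegative. -/
/-!
Put `w = |u| ‖Y‖`. Cauchy–Schwarz bounds the mixed term by `p ‖X‖ w^(p-1) / g v`, and the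
growth condition on `g'` bounds the last term below by `(p-1) s^p` with `s = w / (g v)^(1/(p-1))`,
for which `w^(p-1) / g v = s^(p-1)`. What remains is Young's inequality
`p ‖X‖ s^(p-1) ≤ ‖X‖^p + (p-1) s^p`.
-/

namespace Picone

open Real

lemma rpow_sub_two_mul_self {x p : ℝ} (hx : 0 ≤ x) (hp : p ≠ 1) :
    x ^ (p - 2) * x = x ^ (p - 1) := by
  rw [← rpow_add_one' hx (by intro h; apply hp; linarith)]
  ring_nf

lemma young_rpow {p a s : ℝ} (hp : 1 < p) (ha : 0 ≤ a) (hs : 0 ≤ s) :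
    p * a * s ^ (p - 1) ≤ a ^ p + (p - 1) * s ^ p := by
  have hq : p.HolderConjugate (p / (p - 1)) := HolderConjugate.conjExponent hp
  have hy := young_inequality_of_nonneg ha (rpow_nonneg hs (p - 1)) hq
  rw [← rpow_mul hs, mul_div_cancel₀ _ (by linarith : p - 1 ≠ 0), div_div_eq_mul_div] at hy
  have hp0 : 0 < p := by linarith
  calc p * a * s ^ (p - 1) = p * (a * s ^ (p - 1)) := by ring
    _ ≤ p * (a ^ p / p + s ^ p * (p - 1) / p) := by gcongr
    _ = a ^ p + (p - 1) * s ^ p := by field_simp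

lemma mul_inner_mul_rpow_le {E : Type*} [NormedAddCommGroup E] [InnerProductSpace ℝ E]
    {p : ℝ} (hp : p ≠ 1) (u : ℝ) (X Y : E) :
    |u| ^ (p - 2) * u * inner ℝ X Y * ‖Y‖ ^ (p - 2) ≤ ‖X‖ * (|u| * ‖Y‖) ^ (p - 1) := by
  have hCS : u * inner ℝ X Y ≤ |u| * (‖X‖ * ‖Y‖) :=
    calc u * inner ℝ X Y ≤ |u| * |inner ℝ X Y| := (le_abs_self _).trans (abs_mul _ _).le
      _ ≤ |u| * (‖X‖ * ‖Y‖) := by gcongr; exact abs_real_inner_le_norm X Y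
  calc |u| ^ (p - 2) * u * inner ℝ X Y * ‖Y‖ ^ (p - 2)
      = |u| ^ (p - 2) * ‖Y‖ ^ (p - 2) * (u * inner ℝ X Y) := by ring
    _ ≤ |u| ^ (p - 2) * ‖Y‖ ^ (p - 2) * (|u| * (‖X‖ * ‖Y‖)) := by gcongr
    _ = ‖X‖ * ((|u| ^ (p - 2) * |u|) * (‖Y‖ ^ (p - 2) * ‖Y‖)) := by ring
    _ = ‖X‖ * (|u| * ‖Y‖) ^ (p - 1) := by
      rw [rpow_sub_two_mul_self (abs_nonneg u) hp, rpow_sub_two_mul_self (norm_nonneg Y) hp,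
        mul_rpow (abs_nonneg u) (norm_nonneg Y)]

lemma picone_scalar_nonneg {p a w G D : ℝ} (hp : 1 < p) (ha : 0 ≤ a) (hw : 0 ≤ w) (hG : 0 < G)
    (hD : (p - 1) * G ^ ((p - 2) / (p - 1)) ≤ D) :
    0 ≤ a ^ p - p * a * w ^ (p - 1) / G + D * w ^ p / G ^ 2 := by
  have hp1 : p - 1 ≠ 0 := by linarith
  set s := w / G ^ (p - 1)⁻¹
  have hs : 0 ≤ s := by positivity
  have hs_sub : s ^ (p - 1) = w ^ (p - 1) / G := by
    rw [div_rpow hw (by positivity), ← rpow_mul hG.le, inv_mul_cancel₀ hp1, rpow_one]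
  have hs_pow : (p - 1) * s ^ p ≤ D * w ^ p / G ^ 2 := by
    have hG2 : G ^ ((p - 2) / (p - 1)) * G ^ (p / (p - 1)) = G ^ 2 := by
      rw [← rpow_add hG, ← rpow_two]
      congr 1
      field_simp
      ring
    calc (p - 1) * s ^ p
        = (p - 1) * G ^ ((p - 2) / (p - 1)) * w ^ p
            / (G ^ ((p - 2) / (p - 1)) * G ^ (p / (p - 1))) := by
          rw [div_rpow hw (by positivity), ← rpow_mul hG.le, inv_mul_eq_div]
          field_simp
      _ = (p - 1) * G ^ ((p - 2) / (p - 1)) * w ^ p / G ^ 2 := by rw [hG2]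
      _ ≤ D * w ^ p / G ^ 2 := by gcongr
  have hyoung := young_rpow hp ha hs
  rw [hs_sub, ← mul_div_assoc] at hyoung
  linarith

end Picone

open Picone Real in
theorem stmt_4_general (n : ℕ) (p : ℝ) (hp : 1 < p)
    (X Y : EuclideanSpace ℝ (Fin n)) (u v : ℝ)
    (g : ℝ → ℝ) (hgpos : 0 < g v)
    (hg' : deriv g v ≥ (p - 1) * (g v) ^ ((p - 2) / (p - 1))) :
    0 ≤ ‖X‖ ^ p
        - p * (|u| ^ (p - 2) * u / g v) * (inner ℝ X Y : ℝ) * ‖Y‖ ^ (p - 2)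
        + (deriv g v * |u| ^ p / (g v) ^ 2) * ‖Y‖ ^ p := by
  have hmixed : p * (|u| ^ (p - 2) * u * inner ℝ X Y * ‖Y‖ ^ (p - 2)) / g v
      ≤ p * ‖X‖ * (|u| * ‖Y‖) ^ (p - 1) / g v := by
    rw [mul_assoc p]
    gcongr p * ?_ / _
    exact mul_inner_mul_rpow_le hp.ne' u X Y
  have hscalar := picone_scalar_nonneg hp (norm_nonneg X) (by positivity : 0 ≤ |u| * ‖Y‖) hgpos hg'
  rw [mul_rpow (z := p) (abs_nonneg u) (norm_nonneg Y)] at hscalar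
  calc 0 ≤ ‖X‖ ^ p - p * (|u| ^ (p - 2) * u * inner ℝ X Y * ‖Y‖ ^ (p - 2)) / g v
        + deriv g v * (|u| ^ p * ‖Y‖ ^ p) / g v ^ 2 := by linarith
    _ = _ := by ring

/-- Pointwise algebraic Picone identity: for vectors `X, Y ∈ ℝⁿ`, `u ∈ ℝ`, `v > 0`,
`p > 1` and `g` differentiable at `v` with `g v > 0` and
`g' v ≥ (p-1) * (g v)^((p-2)/(p-1))`, the quantity
`L = |X|^p - p (|u|^(p-2) u / g v) ⟨X,Y⟩ |Y|^(p-2) + (g' v |u|^p / (g v)^2) |Y|^p`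
is nonnegative. -/
theorem stmt_4 (n : ℕ) (p : ℝ) (hp : 1 < p)
    (X Y : EuclideanSpace ℝ (Fin n)) (u v : ℝ) (hv : 0 < v)
    (g : ℝ → ℝ) (hgd : DifferentiableAt ℝ g v) (hgpos : 0 < g v)
    (hg' : deriv g v ≥ (p - 1) * (g v) ^ ((p - 2) / (p - 1))) :
    0 ≤ ‖X‖ ^ p
        - p * (|u| ^ (p - 2) * u / g v) * (inner ℝ X Y : ℝ) * ‖Y‖ ^ (p - 2)
        + (deriv g v * |u| ^ p / (g v) ^ 2) * ‖Y‖ ^ p :=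
  stmt_4_general n p hp X Y u v g hgpos hg'
end

section
/- Equality case of the pointwise Picone expression for g(v) = v^(p-1): if X, Y ∈ R^n, u ∈ R, v > 0, p > 1, and |X|^p - p·(|u|^(p-2)u/v^(p-1))·⟨X,Y⟩·|Y|^(p-2) + (p-1)·(|u|^p/v^p)·|Y|^p = 0, then X = (u/v)·Y. -/
/-!
With `W = (u / v) • Y` the expression is `‖X‖ ^ p - p ⟪X, W⟫ ‖W‖ ^ (p - 2) + (p - 1) ‖W‖ ^ p`.
Cauchy–Schwarz bounds it below by `‖X‖ ^ p - p ‖X‖ ‖W‖ ^ (p - 1) + (p - 1) ‖W‖ ^ p`, which is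
nonnegative by Young's inequality with exponents `p` and `p / (p - 1)` and vanishes only when
`‖X‖ = ‖W‖`. So if the expression vanishes, both inequalities are equalities, and equality in
Cauchy–Schwarz between vectors of equal norm gives `X = W`.
-/

open Real

namespace Real

variable {p a b : ℝ}

theorem mul_mul_rpow_sub_one_le (hp : 1 < p) (ha : 0 ≤ a) (hb : 0 ≤ b) :
    p * a * b ^ (p - 1) ≤ a ^ p + (p - 1) * b ^ p := by
  have hyoung := young_inequality_of_nonneg ha (rpow_nonneg hb (p - 1))
    (HolderConjugate.conjExponent hp)
  rw [← rpow_mul hb, conjExponent, mul_div_cancel₀ p (by linarith : p - 1 ≠ 0)] at hyoung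
  have := mul_le_mul_of_nonneg_left hyoung (by linarith : 0 ≤ p)
  field_simp at this
  linarith

theorem mul_mul_rpow_sub_one_eq_iff (hp : 1 < p) (ha : 0 ≤ a) (hb : 0 ≤ b) :
    p * a * b ^ (p - 1) = a ^ p + (p - 1) * b ^ p ↔ a = b := by
  have hyoung := young_inequality_eq_iff_of_nonneg ha (rpow_nonneg hb (p - 1))
    (HolderConjugate.conjExponent hp)
  rw [← rpow_mul hb, conjExponent, mul_div_cancel₀ p (by linarith : p - 1 ≠ 0),
    rpow_left_inj ha hb (by linarith)] at hyoung
  rw [← hyoung]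
  have hp0 : p ≠ 0 := by linarith
  have hp1 : p - 1 ≠ 0 := by linarith
  constructor <;> intro h <;> field_simp at h ⊢ <;> linarith

end Real

open scoped InnerProductSpace

section Picone

variable {E : Type*} [NormedAddCommGroup E] [InnerProductSpace ℝ E]

noncomputable def piconeForm (p : ℝ) (X W : E) : ℝ :=
  ‖X‖ ^ p - p * ⟪X, W⟫_ℝ * ‖W‖ ^ (p - 2) + (p - 1) * ‖W‖ ^ p

theorem real_inner_mul_norm_rpow_sub_two_le (p : ℝ) (X W : E) :
    ⟪X, W⟫_ℝ * ‖W‖ ^ (p - 2) ≤ ‖X‖ * ‖W‖ ^ (p - 1) := by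
  rcases eq_or_ne W 0 with rfl | hW
  · simp only [inner_zero_right, zero_mul, norm_zero]
    positivity
  rw [show p - 1 = p - 2 + 1 by ring, rpow_add_one (norm_ne_zero_iff.2 hW),
    mul_comm (‖W‖ ^ (p - 2)), ← mul_assoc]
  exact mul_le_mul_of_nonneg_right (real_inner_le_norm X W) (rpow_nonneg (norm_nonneg W) _)

theorem eq_of_piconeForm_eq_zero {p : ℝ} (hp : 1 < p) {X W : E} (h : piconeForm p X W = 0) :
    X = W := by
  have hyoung := mul_mul_rpow_sub_one_le hp (norm_nonneg X) (norm_nonneg W)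
  have hinner := mul_le_mul_of_nonneg_left (real_inner_mul_norm_rpow_sub_two_le p X W)
    (by linarith : 0 ≤ p)
  rw [piconeForm] at h
  have hnorm : ‖X‖ = ‖W‖ :=
    (mul_mul_rpow_sub_one_eq_iff hp (norm_nonneg X) (norm_nonneg W)).1 (by linarith)
  rcases eq_or_ne W 0 with rfl | hW
  · simpa using hnorm
  have hW' : ‖W‖ ≠ 0 := norm_ne_zero_iff.2 hW
  have hinner_eq : ⟪X, W⟫_ℝ = ‖X‖ * ‖W‖ := by
    have hyoung_eq := (mul_mul_rpow_sub_one_eq_iff hp (norm_nonneg X) (norm_nonneg W)).2 hnorm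
    have : p * (⟪X, W⟫_ℝ * ‖W‖ ^ (p - 2)) = p * (‖X‖ * ‖W‖ * ‖W‖ ^ (p - 2)) := by
      rw [mul_assoc ‖X‖, mul_comm ‖W‖, ← rpow_add_one hW', show p - 2 + 1 = p - 1 by ring]
      linarith
    exact mul_right_cancel₀ (rpow_pos_of_pos (norm_pos_iff.2 hW) _).ne'
      (mul_left_cancel₀ (by linarith) this)
  rw [inner_eq_norm_mul_iff_real, hnorm] at hinner_eq
  exact smul_right_injective E hW' hinner_eq

theorem piconeForm_smul_right (p c : ℝ) (X Y : E) :
    piconeForm p X (c • Y) =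
      ‖X‖ ^ p - p * (|c| ^ (p - 2) * c) * ⟪X, Y⟫_ℝ * ‖Y‖ ^ (p - 2)
        + (p - 1) * |c| ^ p * ‖Y‖ ^ p := by
  simp only [piconeForm, norm_smul, real_inner_smul_right, Real.norm_eq_abs,
    mul_rpow (abs_nonneg c) (norm_nonneg Y)]
  ring

end Picone

/-- Equality case of the pointwise Picone expression for `g v = v^(p-1)`:
if the Picone expression vanishes then `v • X = u • Y`, i.e. `X = (u/v) • Y`. -/
theorem stmt_6 (n : ℕ) (p : ℝ) (hp : 1 < p)
    (X Y : EuclideanSpace ℝ (Fin n)) (u v : ℝ) (hv : 0 < v)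
    (h : ‖X‖ ^ p
        - p * (|u| ^ (p - 2) * u / v ^ (p - 1)) * (inner ℝ X Y : ℝ) * ‖Y‖ ^ (p - 2)
        + (p - 1) * (|u| ^ p / v ^ p) * ‖Y‖ ^ p = 0) :
    X = (u / v) • Y := by
  have habs (q : ℝ) : |u / v| ^ q = |u| ^ q / v ^ q := by
    rw [abs_div, abs_of_pos hv, div_rpow (abs_nonneg u) hv.le]
  have hcoeff : |u / v| ^ (p - 2) * (u / v) = |u| ^ (p - 2) * u / v ^ (p - 1) := by
    rw [habs, show p - 1 = p - 2 + 1 by ring, rpow_add_one hv.ne']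
    field_simp
  refine eq_of_piconeForm_eq_zero hp ?_
  rwa [piconeForm_smul_right, hcoeff, habs]
end
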